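/- arXiv:1012.5103 — 2 statements merged into one kernel-verified Lean document; each statement's English description precedes it below -/
import Mathlib

section
/- Let H be a Hilbert space, (P_h) a family of orthogonal finite-rank projections with P_h x → x as h → 0⁺ for every x ∈ H, A a bounded self-adjoint operator on H, and A_h := P_h A P_h restricted to range(P_h). If ‖A_h⁻¹‖ ≤ M for all sufficiently small h (with the convention ‖B⁻¹‖ = ∞ when B is not invertible), then ‖x‖ ≤ M‖Ax‖ and ‖x‖ ≤ M‖A*x‖ for all x ∈ H, and consequently A is invertible. -/
open Filter Topology ContinuousLinearMap

/-!
Orthogonal projections are contractions, so `P_h → 1` strongly forces the compressions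
`P_h A P_h` to converge strongly to `A`; passing to the limit in
`‖P_h x‖ ≤ M ‖P_h A P_h x‖` gives `‖x‖ ≤ M ‖A x‖`, and likewise for `A* = A`.
An operator on a Hilbert space that is bounded below has closed range, and if its adjoint
is injective that range is also dense, so the operator is bijective, hence invertible.
-/

section StrongConvergence

variable {ι 𝕜 E : Type*} [NontriviallyNormedField 𝕜] [SeminormedAddCommGroup E]
  [NormedSpace 𝕜 E] {l : Filter ι} {P : ι → E →L[𝕜] E}

theorem tendsto_apply_of_tendsto_of_norm_le_one (hP : ∀ᶠ i in l, ‖P i‖ ≤ 1)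
    (hstrong : ∀ x, Tendsto (fun i => P i x) l (𝓝 x)) {y : ι → E} {y₀ : E}
    (hy : Tendsto y l (𝓝 y₀)) : Tendsto (fun i => P i (y i)) l (𝓝 y₀) := by
  rw [tendsto_iff_norm_sub_tendsto_zero] at hy ⊢
  have hPy₀ := tendsto_iff_norm_sub_tendsto_zero.mp (hstrong y₀)
  refine squeeze_zero' (Eventually.of_forall fun _ => norm_nonneg _) ?_
    (by simpa using hy.add hPy₀)
  filter_upwards [hP] with i hPi
  calc ‖P i (y i) - y₀‖ = ‖P i (y i - y₀) + (P i y₀ - y₀)‖ := by rw [map_sub]; abel_nf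
    _ ≤ ‖P i (y i - y₀)‖ + ‖P i y₀ - y₀‖ := norm_add_le _ _
    _ ≤ ‖y i - y₀‖ + ‖P i y₀ - y₀‖ := by
      gcongr
      exact (P i).le_of_opNorm_le hPi _ |>.trans_eq (one_mul _)

theorem tendsto_compression_apply (hP : ∀ᶠ i in l, ‖P i‖ ≤ 1)
    (hstrong : ∀ x, Tendsto (fun i => P i x) l (𝓝 x)) (A : E →L[𝕜] E) (x : E) :
    Tendsto (fun i => P i (A (P i x))) l (𝓝 (A x)) :=
  tendsto_apply_of_tendsto_of_norm_le_one hP hstrong ((A.continuous.tendsto x).comp (hstrong x))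

theorem norm_le_mul_norm_of_eventually_compression [l.NeBot] (hP : ∀ᶠ i in l, ‖P i‖ ≤ 1)
    (hstrong : ∀ x, Tendsto (fun i => P i x) l (𝓝 x)) {A : E →L[𝕜] E} {M : ℝ}
    (hstable : ∀ᶠ i in l, ∀ x, ‖P i x‖ ≤ M * ‖P i (A (P i x))‖) (x : E) :
    ‖x‖ ≤ M * ‖A x‖ :=
  le_of_tendsto_of_tendsto ((hstrong x).norm)
    (((tendsto_compression_apply hP hstrong A x).norm).const_mul M)
    (hstable.mono fun _ h => h x)

end StrongConvergence

section Invertibility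

variable {𝕜 E : Type*} [RCLike 𝕜] [NormedAddCommGroup E] [InnerProductSpace 𝕜 E]
  [CompleteSpace E]

theorem isUnit_of_norm_le_mul_norm_of_norm_le_mul_norm_adjoint {f : E →L[𝕜] E} {M : ℝ}
    (hf : ∀ x, ‖x‖ ≤ M * ‖f x‖) (hf' : ∀ x, ‖x‖ ≤ M * ‖adjoint f x‖) : IsUnit f := by
  have hanti : AntilipschitzWith M.toNNReal f :=
    f.antilipschitz_of_bound fun x =>
      (hf x).trans (mul_le_mul_of_nonneg_right (Real.le_coe_toNNReal M) (norm_nonneg _))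
  have hker : (adjoint f).ker = ⊥ := by
    rw [Submodule.eq_bot_iff]
    intro x hx
    have hx' := hf' x
    rw [show adjoint f x = 0 from hx, norm_zero, mul_zero] at hx'
    exact norm_le_zero_iff.mp hx'
  rw [isUnit_iff_bijective, bijective_iff_dense_range_and_antilipschitz]
  refine ⟨?_, _, hanti⟩
  rw [Submodule.topologicalClosure_eq_top_iff, orthogonal_range, hker]

end Invertibility

/-- Stability implies invertibility: if the compressions `A_h = P_h A P_h` of a bounded
self-adjoint operator `A` to the ranges of orthogonal finite-rank projections `P_h → 1`
(strongly, as `h → 0⁺`) have inverses uniformly bounded by `M`, then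
`‖x‖ ≤ M‖Ax‖` and `‖x‖ ≤ M‖A*x‖` for all `x`, and `A` is invertible. -/
theorem stability_implies_invertible
    {H : Type*} [NormedAddCommGroup H] [InnerProductSpace ℂ H] [CompleteSpace H]
    (P : ℝ → H →L[ℂ] H)
    (hproj : ∀ h : ℝ, 0 < h → IsIdempotentElem (P h) ∧ adjoint (P h) = P h ∧
      FiniteDimensional ℂ (LinearMap.range (P h : H →ₗ[ℂ] H)))
    (hstrong : ∀ x : H, Tendsto (fun h : ℝ => P h x) (𝓝[>] (0 : ℝ)) (𝓝 x))
    (A : H →L[ℂ] H) (hA : IsSelfAdjoint A)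
    (M : ℝ)
    (hstable : ∃ h₀ : ℝ, 0 < h₀ ∧ ∀ h ∈ Set.Ioc (0 : ℝ) h₀, ∀ x : H,
      ‖P h x‖ ≤ M * ‖P h (A (P h x))‖) :
    (∀ x : H, ‖x‖ ≤ M * ‖A x‖ ∧ ‖x‖ ≤ M * ‖adjoint A x‖) ∧ IsUnit A := by
  obtain ⟨h₀, hh₀, hstable⟩ := hstable
  have hcontr : ∀ᶠ h in 𝓝[>] (0 : ℝ), ‖P h‖ ≤ 1 :=
    eventually_mem_nhdsWithin.mono fun h hh =>
      IsStarProjection.norm_le _ ⟨(hproj h hh).1, (hproj h hh).2.1⟩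
  have hbound : ∀ x, ‖x‖ ≤ M * ‖A x‖ :=
    norm_le_mul_norm_of_eventually_compression hcontr hstrong
      (mem_of_superset (Ioc_mem_nhdsGT hh₀) hstable)
  have hbound' : ∀ x, ‖x‖ ≤ M * ‖adjoint A x‖ := by rwa [hA.adjoint_eq]
  exact ⟨fun x => ⟨hbound x, hbound' x⟩,
    isUnit_of_norm_le_mul_norm_of_norm_le_mul_norm_adjoint hbound hbound'⟩
end

section
/- Let A be a bounded self-adjoint operator on a Hilbert space H with numerical range in [m, M], m > 0, and (P_h) orthogonal projections converging strongly to the identity. If λ ∈ ℝ is such that there are ε > 0 and h₀ > 0 with dist(λ, σ(A_h)) ≥ ε for all 0 < h ≤ h₀ (A_h the compressions of A), then λ ∉ σ(A). Equivalently, σ(A) ⊆ liminf_{h→0⁺} σ(A_h). -/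
/-!
For `u` in the range of `P_h`, the compression `A_h` is self-adjoint, and the resolvent of a
normal operator has norm the reciprocal of the distance to the spectrum; hence
`ε ‖u‖ ≤ ‖(λ - A_h) u‖ = ‖P_h (λ - A) u‖ ≤ ‖(λ - A) u‖`. Taking `u = P_h x` and letting `h → 0⁺`
gives `ε ‖x‖ ≤ ‖(λ - A) x‖`. A self-adjoint operator that is bounded below is injective with
closed range, and its range is dense because its orthogonal complement is the kernel; so
`λ - A` is invertible.
-/

open Filter Topology

theorem IsStarNormal.norm_inv_le {A : Type*} [CStarAlgebra A] (a : Aˣ) [IsStarNormal (a : A)]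
    {ε : ℝ} (hε : 0 < ε) (h : ∀ z ∈ spectrum ℂ (a : A), ε ≤ ‖z‖) :
    ‖(↑a⁻¹ : A)‖ ≤ ε⁻¹ := by
  have hrad : spectralRadius ℂ (↑a⁻¹ : A) ≤ ENNReal.ofReal ε⁻¹ := by
    refine iSup₂_le fun w hw => ?_
    rw [← spectrum.map_inv] at hw
    obtain ⟨z, hz, rfl⟩ : ∃ z ∈ spectrum ℂ (a : A), z⁻¹ = w := ⟨w⁻¹, hw, inv_inv w⟩
    rw [← enorm_eq_nnnorm, ← ofReal_norm, norm_inv]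
    exact ENNReal.ofReal_le_ofReal (inv_anti₀ hε (h z hz))
  rw [IsStarNormal.spectralRadius_eq_nnnorm, ← enorm_eq_nnnorm, ← ofReal_norm] at hrad
  exact (ENNReal.ofReal_le_ofReal_iff (by positivity)).mp hrad

instance IsStarNormal.algebraMap_sub {A : Type*} [Ring A] [StarRing A] [Algebra ℂ A]
    [StarModule ℂ A] (c : ℂ) (a : A) [IsStarNormal a] :
    IsStarNormal (algebraMap ℂ A c - a) :=
  have : IsStarNormal (algebraMap ℂ A c) :=
    ⟨by rw [← algebraMap_star_comm]; exact Algebra.commutes _ _⟩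
  Commute.isStarNormal_sub (Algebra.commutes _ _)

theorem ContinuousLinearMap.mul_norm_le_norm_smul_sub_apply {E : Type*} [NormedAddCommGroup E]
    [InnerProductSpace ℂ E] [CompleteSpace E] (T : E →L[ℂ] E) [IsStarNormal T] {c : ℂ} {ε : ℝ}
    (hε : 0 < ε) (hsep : ∀ z ∈ spectrum ℂ T, ε ≤ dist c z) (u : E) :
    ε * ‖u‖ ≤ ‖c • u - T u‖ := by
  have hsep' : ∀ z ∈ spectrum ℂ (algebraMap ℂ _ c - T), ε ≤ ‖z‖ := by
    rw [← spectrum.singleton_sub_eq]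
    rintro _ ⟨_, rfl, z, hz, rfl⟩
    simpa [dist_eq_norm] using hsep z hz
  obtain ⟨S, hS⟩ : IsUnit (algebraMap ℂ _ c - T) :=
    spectrum.notMem_iff.mp fun hc => by simpa [hε.not_ge] using hsep c hc
  have hSu : (S : E →L[ℂ] E) u = c • u - T u := by simp [hS, Algebra.algebraMap_eq_smul_one]
  have : IsStarNormal (S : E →L[ℂ] E) := hS ▸ inferInstance
  have hinv : ‖(↑S⁻¹ : E →L[ℂ] E)‖ ≤ ε⁻¹ := IsStarNormal.norm_inv_le S hε (hS ▸ hsep')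
  calc ε * ‖u‖ = ε * ‖(↑S⁻¹ : E →L[ℂ] E) ((S : E →L[ℂ] E) u)‖ := by
        rw [← mul_apply_eq_comp, S.inv_mul, one_apply_eq_self]
    _ ≤ ε * (ε⁻¹ * ‖(S : E →L[ℂ] E) u‖) := by
        gcongr
        exact (ContinuousLinearMap.le_opNorm _ _).trans (by gcongr)
    _ = ‖c • u - T u‖ := by rw [hSu, ← mul_assoc, mul_inv_cancel₀ hε.ne', one_mul]

theorem ContinuousLinearMap.isUnit_of_forall_mul_norm_le {E : Type*} [NormedAddCommGroup E]
    [InnerProductSpace ℂ E] [CompleteSpace E] {T : E →L[ℂ] E} [IsStarNormal T] {ε : ℝ}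
    (hε : 0 < ε) (h : ∀ x, ε * ‖x‖ ≤ ‖T x‖) : IsUnit T := by
  have hanti : AntilipschitzWith (Real.toNNReal ε)⁻¹ T :=
    T.antilipschitz_of_bound fun x => by
      rw [NNReal.coe_inv, Real.coe_toNNReal _ hε.le, inv_mul_eq_div, le_div_iff₀ hε, mul_comm]
      exact h x
  rw [ContinuousLinearMap.isUnit_iff_bijective,
    ContinuousLinearMap.bijective_iff_dense_range_and_antilipschitz]
  refine ⟨?_, _, hanti⟩
  rw [Submodule.topologicalClosure_eq_top_iff, IsStarNormal.orthogonal_range ‹_›,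
    LinearMap.ker_eq_bot.mpr hanti.injective]

theorem IsIdempotentElem.apply_coe_range {R M : Type*} [Semiring R] [AddCommMonoid M]
    [Module R M] [TopologicalSpace M] {p : M →L[R] M} (hp : IsIdempotentElem p)
    (u : LinearMap.range (p : M →ₗ[R] M)) : p u = u :=
  (LinearMap.IsIdempotentElem.mem_range_iff
    (ContinuousLinearMap.IsIdempotentElem.toLinearMap hp)).mp u.2

def compression {H : Type*} [NormedAddCommGroup H] [InnerProductSpace ℂ H]
    (P A : H →L[ℂ] H) : LinearMap.range (P : H →ₗ[ℂ] H) →L[ℂ] LinearMap.range (P : H →ₗ[ℂ] H) :=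
  ContinuousLinearMap.codRestrict
    ((P.comp A).comp (Submodule.subtypeL (LinearMap.range (P : H →ₗ[ℂ] H))))
    (LinearMap.range (P : H →ₗ[ℂ] H))
    (fun x => LinearMap.mem_range.mpr ⟨A x, rfl⟩)

section Compression

variable {H : Type*} [NormedAddCommGroup H] [InnerProductSpace ℂ H] {P A : H →L[ℂ] H}

@[simp]
theorem coe_compression_apply (u : LinearMap.range (P : H →ₗ[ℂ] H)) :
    (compression P A u : H) = P (A u) := rfl

variable [CompleteSpace H]

theorem isSelfAdjoint_compression [CompleteSpace (LinearMap.range (P : H →ₗ[ℂ] H))]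
    (hP : IsStarProjection P) (hA : IsSelfAdjoint A) :
    IsSelfAdjoint (compression P A) := by
  rw [ContinuousLinearMap.isSelfAdjoint_iff_isSymmetric]
  intro u v
  have hPsymm : ∀ x y : H, inner ℂ (P x) y = inner ℂ x (P y) := hP.isSelfAdjoint.isSymmetric
  have hAsymm : ∀ x y : H, inner ℂ (A x) y = inner ℂ x (A y) := hA.isSymmetric
  have hfix := hP.isIdempotentElem.apply_coe_range
  simp only [ContinuousLinearMap.coe_coe, Submodule.coe_inner, coe_compression_apply]
  rw [hPsymm, hfix, hAsymm, ← hPsymm, hfix]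

theorem mul_norm_le_of_le_dist_spectrum_compression (hP : IsStarProjection P)
    (hA : IsSelfAdjoint A) {c : ℂ} {ε : ℝ} (hε : 0 < ε)
    (hsep : ∀ z ∈ spectrum ℂ (compression P A), ε ≤ dist c z) (x : H) :
    ε * ‖P x‖ ≤ ‖c • P x - A (P x)‖ := by
  have :=
    (ContinuousLinearMap.IsIdempotentElem.isClosed_range hP.isIdempotentElem).completeSpace_coe
  have : IsStarNormal (compression P A) := (isSelfAdjoint_compression hP hA).isStarNormal
  let u : LinearMap.range (P : H →ₗ[ℂ] H) := ⟨P x, x, rfl⟩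
  calc ε * ‖P x‖ = ε * ‖u‖ := rfl
    _ ≤ ‖c • P x - P (A (P x))‖ := (compression P A).mul_norm_le_norm_smul_sub_apply hε hsep u
    _ = ‖P (c • P x - A (P x))‖ := by
        rw [map_sub, map_smul, hP.isIdempotentElem.apply_coe_range u]
    _ ≤ ‖c • P x - A (P x)‖ := P.le_of_opNorm_le (hP.norm_le P) _ |>.trans_eq (one_mul _)

end Compression

theorem spectrum_liminf_compressions_general
    {H : Type*} [NormedAddCommGroup H] [InnerProductSpace ℂ H] [CompleteSpace H]
    (A : H →L[ℂ] H) (hA : IsSelfAdjoint A)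
    (P : ℝ → H →L[ℂ] H)
    (hproj : ∀ h : ℝ, 0 < h → IsIdempotentElem (P h) ∧
      ContinuousLinearMap.adjoint (P h) = P h)
    (hstrong : ∀ x : H, Tendsto (fun h : ℝ => P h x) (𝓝[>] (0 : ℝ)) (𝓝 x))
    (lam : ℝ) (ε h₀ : ℝ) (hε : 0 < ε) (hh₀ : 0 < h₀)
    (hsep : ∀ h ∈ Set.Ioc (0 : ℝ) h₀,
      ∀ z ∈ spectrum ℂ
        (ContinuousLinearMap.codRestrict
          (((P h).comp A).comp (Submodule.subtypeL (LinearMap.range (P h : H →ₗ[ℂ] H))))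
          (LinearMap.range (P h : H →ₗ[ℂ] H))
          (fun x => LinearMap.mem_range.mpr ⟨A x, rfl⟩)),
        ε ≤ dist (lam : ℂ) z) :
    (lam : ℂ) ∉ spectrum ℂ A := by
  have hbound (x : H) : ε * ‖x‖ ≤ ‖(lam : ℂ) • x - A x‖ := by
    have hcompressed : ∀ᶠ h in 𝓝[>] (0 : ℝ), ε * ‖P h x‖ ≤ ‖(lam : ℂ) • P h x - A (P h x)‖ :=
      eventually_of_mem (Ioc_mem_nhdsGT hh₀) fun h hh =>
        mul_norm_le_of_le_dist_spectrum_compression ⟨(hproj h hh.1).1, (hproj h hh.1).2⟩ hA hε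
          (hsep h hh) x
    exact le_of_tendsto_of_tendsto (((hstrong x).norm).const_mul ε)
      (((hstrong x).const_smul _).sub ((A.continuous.tendsto x).comp (hstrong x))).norm
      hcompressed
  have := hA.isStarNormal
  rw [spectrum.notMem_iff]
  exact ContinuousLinearMap.isUnit_of_forall_mul_norm_le hε fun x => by
    simpa [Algebra.algebraMap_eq_smul_one] using hbound x

/-- Spectral approximation: if `λ ∈ ℝ` keeps distance `≥ ε` from the spectra of all
compressions `A_h = P_h A P_h |_{range P_h}` for all small `h > 0`, then `λ ∉ σ(A)`;
i.e. `σ(A) ⊆ liminf σ(A_h)`. -/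
theorem spectrum_liminf_compressions
    {H : Type*} [NormedAddCommGroup H] [InnerProductSpace ℂ H] [CompleteSpace H]
    (A : H →L[ℂ] H) (hA : IsSelfAdjoint A)
    (m M : ℝ) (hm_pos : 0 < m)
    (hnum : ∀ x : H, m * ‖x‖ ^ 2 ≤ (inner ℂ (A x) x : ℂ).re ∧
      (inner ℂ (A x) x : ℂ).re ≤ M * ‖x‖ ^ 2)
    (P : ℝ → H →L[ℂ] H)
    (hproj : ∀ h : ℝ, 0 < h → IsIdempotentElem (P h) ∧
      ContinuousLinearMap.adjoint (P h) = P h)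
    (hstrong : ∀ x : H, Tendsto (fun h : ℝ => P h x) (𝓝[>] (0 : ℝ)) (𝓝 x))
    (lam : ℝ) (ε h₀ : ℝ) (hε : 0 < ε) (hh₀ : 0 < h₀)
    (hsep : ∀ h ∈ Set.Ioc (0 : ℝ) h₀,
      ∀ z ∈ spectrum ℂ
        (ContinuousLinearMap.codRestrict
          (((P h).comp A).comp (Submodule.subtypeL (LinearMap.range (P h : H →ₗ[ℂ] H))))
          (LinearMap.range (P h : H →ₗ[ℂ] H))
          (fun x => LinearMap.mem_range.mpr ⟨A x, rfl⟩)),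
        ε ≤ dist (lam : ℂ) z) :
    (lam : ℂ) ∉ spectrum ℂ A :=
  spectrum_liminf_compressions_general A hA P hproj hstrong lam ε h₀ hε hh₀ hsep
end
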